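/- Let L be a complete lattice and o : L → EReal a function preserving arbitrary suprema such that o(P) > ⊥ for all P ≠ ⊥, and such that there exists a family (P_i)_{i∈I} with ⨆ i, P_i = ⊤ and o(P_i) < ⊤ for all i. Then the right adjoint E : EReal → L of o, defined by E(r) = ⨆ { P | o P ≤ r }, satisfies E(⊥) = ⊥ and ⨆_{r < ⊤} E(r)'s image covers ⊤ in the sense that E(⊤) = ⊤ and E is monotone and right-continuous: E(r) = ⨅_{s > r} E(s) for r < ⊤. -/
import Mathlib


theorem q_observable_right_adjoint_is_spectral_family {L : Type*} [CompleteLattice L]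
    (o : L → EReal)
    (hsup : ∀ S : Set L, o (sSup S) = sSup (o '' S))
    (ha : ∀ P : L, P ≠ ⊥ → ⊥ < o P)
    (hb : ∃ (ι : Type) (P : ι → L), (⨆ i, P i) = ⊤ ∧ ∀ i, o (P i) < ⊤) :
    (sSup {P : L | o P ≤ (⊥ : EReal)} = ⊥) ∧
      (sSup {P : L | o P ≤ (⊤ : EReal)} = ⊤) ∧
      Monotone (fun r : EReal => sSup {P : L | o P ≤ r}) ∧
      ∀ r : EReal, r < ⊤ →
        sSup {P : L | o P ≤ r} = ⨅ s ∈ Set.Ioi r, sSup {P : L | o P ≤ s} := by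
  have hmono : Monotone o := by
    intro a b hab
    have h : sSup {a, b} = b := by
      simp [sSup_insert, sup_eq_right.mpr hab]
    have := hsup {a, b}
    rw [h] at this
    rw [this]
    exact le_sSup ⟨a, by simp⟩
  have hE : ∀ r : EReal, o (sSup {P : L | o P ≤ r}) ≤ r := by
    intro r
    rw [hsup]
    exact sSup_le (by rintro x ⟨P, hP, rfl⟩; exact hP)
  have hEmono : Monotone (fun r : EReal => sSup {P : L | o P ≤ r}) := by
    intro r s hrs
    exact sSup_le_sSup (fun P hP => le_trans hP hrs)
  refine ⟨?_, ?_, hEmono, ?_⟩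
  · apply le_antisymm _ bot_le
    apply sSup_le
    intro P hP
    by_contra h
    have hne : P ≠ ⊥ := fun hbot => by rw [hbot] at h; exact h le_rfl
    exact absurd hP (not_le.mpr (ha P hne))
  · apply le_antisymm le_top
    exact le_sSup (by simp)
  · intro r hr
    apply le_antisymm
    · exact le_iInf₂ (fun s hs => hEmono (le_of_lt hs))
    · apply le_sSup
      show o (⨅ s ∈ Set.Ioi r, sSup {P : L | o P ≤ s}) ≤ r
      have h1 : ∀ s ∈ Set.Ioi r, o (⨅ s ∈ Set.Ioi r, sSup {P : L | o P ≤ s}) ≤ s := by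
        intro s hs
        exact le_trans (hmono (biInf_le _ hs)) (hE s)
      have h2 : o (⨅ s ∈ Set.Ioi r, sSup {P : L | o P ≤ s}) ≤ sInf (Set.Ioi r) :=
        le_sInf (fun s hs => h1 s hs)
      have h3 : sInf (Set.Ioi r) ≤ r := by
        by_contra hc
        push_neg at hc
        obtain ⟨s, hrs, hsi⟩ := exists_between hc
        exact absurd (sInf_le hrs) (not_le.mpr hsi)
      exact h2.trans h3
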